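/- Fix positive integers n, b, ℓ, a frequency vector f : Fin n → ℕ with total mass m = Σ_y f(y), and a probability distribution μ on functions h : Fin n → Fin b with collision probability at most 1/b. Let (h₁,…,h_ℓ) be drawn from the ℓ-fold product measure μ^⊗ℓ (independent samples). Then for every x ∈ Fin n: (i) with probability 1, min_{1 ≤ i ≤ ℓ} T_{h_i}(h_i(x)) ≥ f(x); and (ii) Pr[min_{1 ≤ i ≤ ℓ} T_{h_i}(h_i(x)) > f(x) + 2m/b] ≤ 2^{−ℓ}, where the comparison is between real numbers. -/

import Mathlib

open scoped Classical BigOperators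

/-- The counter table of a Count-Min row: `cmTable n b f h j` is the total frequency of
all items hashed by `h` to bin `j`. -/
def cmTable (n b : ℕ) (f : Fin n → ℕ) (h : Fin n → Fin b) (j : Fin b) : ℕ :=
  ∑ y ∈ Finset.univ.filter (fun y => h y = j), f y

/-!
The counter `T_h(h x)` is `f x` plus the overcount `∑_{y ≠ x, h y = h x} f y`, so it never
underestimates. By linearity and the collision bound, the overcount has expectation at most
`m / b`, so by Markov's inequality a single row overestimates by more than `2m/b` with
probability at most `1/2`. The minimum over `ℓ` rows overestimates only if every row does,
and by independence that has probability at most `2^{-ℓ}`.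
-/

open Finset

theorem sum_filter_two_mul_lt_le_half {ι : Type*} [Fintype ι] {w g : ι → ℝ}
    (hw : ∀ i, 0 ≤ w i) (hg : ∀ i, 0 ≤ g i) {a : ℝ} (hE : ∑ i, w i * g i ≤ a) :
    ∑ i ∈ univ.filter (fun i => 2 * a < g i), w i ≤ 1 / 2 := by
  set S := univ.filter (fun i => 2 * a < g i)
  have hwg : ∀ i, 0 ≤ w i * g i := fun i => mul_nonneg (hw i) (hg i)
  have markov : (∑ i ∈ S, w i) * (2 * a) ≤ a :=
    calc (∑ i ∈ S, w i) * (2 * a) ≤ ∑ i ∈ S, w i * g i := by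
          rw [sum_mul]
          exact sum_le_sum fun i hi => mul_le_mul_of_nonneg_left (mem_filter.1 hi).2.le (hw i)
      _ ≤ ∑ i, w i * g i := sum_le_sum_of_subset_of_nonneg (subset_univ S) fun i _ _ => hwg i
      _ ≤ a := hE
  rcases (le_trans (sum_nonneg fun i _ => hwg i) hE).lt_or_eq with ha | rfl
  · nlinarith
  · have hzero : ∀ i ∈ S, w i = 0 := fun i hi => by
      have hgi : 0 < g i := by simpa using (mem_filter.1 hi).2
      have hE0 := (sum_eq_zero_iff_of_nonneg fun i _ => hwg i).1
        (hE.antisymm (sum_nonneg fun i _ => hwg i)) i (mem_univ i)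
      exact (mul_eq_zero.1 hE0).resolve_right hgi.ne'
    rw [sum_eq_zero hzero]
    norm_num

theorem filter_lt_cast_inf'_eq_piFinset {ι α : Type*} [Fintype ι] [DecidableEq ι] [Fintype α]
    (hι : (univ : Finset ι).Nonempty) (F : α → ℕ) (t : ℝ) :
    univ.filter (fun H : ι → α => t < ((univ.inf' hι fun i => F (H i) : ℕ) : ℝ)) =
      Fintype.piFinset fun _ => univ.filter fun a => t < (F a : ℝ) := by
  ext H
  simp [Nat.cast_finsetInf', lt_inf'_iff]

section CountMin

variable {n b : ℕ} (f : Fin n → ℕ)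

def cmOvercount (h : Fin n → Fin b) (x : Fin n) : ℕ :=
  ∑ y ∈ (univ.filter fun y => h y = h x).erase x, f y

theorem cmTable_apply_self (h : Fin n → Fin b) (x : Fin n) :
    cmTable n b f h (h x) = f x + cmOvercount f h x :=
  (add_sum_erase (univ.filter fun y => h y = h x) f (mem_filter.2 ⟨mem_univ x, rfl⟩)).symm

theorem le_cmTable_apply_self (h : Fin n → Fin b) (x : Fin n) : f x ≤ cmTable n b f h (h x) :=
  (cmTable_apply_self f h x).symm ▸ Nat.le_add_right _ _

theorem sum_mul_cmOvercount_le (μ : (Fin n → Fin b) → ℝ)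
    (hcoll : ∀ x y : Fin n, x ≠ y →
      (∑ h : Fin n → Fin b, if h x = h y then μ h else 0) ≤ 1 / (b : ℝ)) (x : Fin n) :
    ∑ h, μ h * cmOvercount f h x ≤ ((∑ y, f y : ℕ) : ℝ) / b := by
  have swap : ∑ h, μ h * cmOvercount f h x =
      ∑ y ∈ univ.erase x, (f y : ℝ) * ∑ h : Fin n → Fin b, if h x = h y then μ h else 0 := by
    simp only [cmOvercount, ← filter_erase, Nat.cast_sum, sum_filter, mul_sum]
    rw [sum_comm]
    refine sum_congr rfl fun y _ => sum_congr rfl fun h _ => ?_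
    by_cases hxy : h x = h y <;> simp [hxy, eq_comm, mul_comm]
  calc ∑ h, μ h * cmOvercount f h x
      ≤ ∑ y ∈ univ.erase x, (f y : ℝ) * (1 / b) := by
        rw [swap]
        exact sum_le_sum fun y hy => mul_le_mul_of_nonneg_left
          (hcoll x y (ne_of_mem_erase hy).symm) (Nat.cast_nonneg _)
    _ ≤ ∑ y, (f y : ℝ) * (1 / b) :=
        sum_le_sum_of_subset_of_nonneg (erase_subset _ _) fun y _ _ => by positivity
    _ = ((∑ y, f y : ℕ) : ℝ) / b := by rw [← sum_mul, Nat.cast_sum, mul_one_div]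

theorem sum_filter_lt_cmTable_le_half (μ : (Fin n → Fin b) → ℝ) (hpos : ∀ h, 0 ≤ μ h)
    (hcoll : ∀ x y : Fin n, x ≠ y →
      (∑ h : Fin n → Fin b, if h x = h y then μ h else 0) ≤ 1 / (b : ℝ)) (x : Fin n) :
    ∑ h ∈ univ.filter (fun h : Fin n → Fin b =>
      (f x : ℝ) + 2 * ((∑ y, f y : ℕ) : ℝ) / b < cmTable n b f h (h x)), μ h ≤ 1 / 2 := by
  have lt_iff : ∀ h : Fin n → Fin b, (f x : ℝ) + 2 * ((∑ y, f y : ℕ) : ℝ) / b <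
      cmTable n b f h (h x) ↔ 2 * (((∑ y, f y : ℕ) : ℝ) / b) < cmOvercount f h x := fun h => by
    rw [cmTable_apply_self, Nat.cast_add, mul_div_assoc, add_lt_add_iff_left]
  rw [filter_congr fun h _ => lt_iff h]
  exact sum_filter_two_mul_lt_le_half hpos (fun h => Nat.cast_nonneg _)
    (sum_mul_cmOvercount_le f μ hcoll x)

end CountMin

theorem count_min_guarantee_general (n b ℓ : ℕ) (hℓ : 0 < ℓ)
    (f : Fin n → ℕ) (μ : (Fin n → Fin b) → ℝ)
    (hpos : ∀ h, 0 ≤ μ h) (hsum : (∑ h : Fin n → Fin b, μ h) = 1)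
    (hcoll : ∀ x y : Fin n, x ≠ y →
      (∑ h : Fin n → Fin b, if h x = h y then μ h else 0) ≤ 1 / (b : ℝ)) :
    ∀ x : Fin n,
      ((∑ H ∈ Finset.univ.filter (fun H : Fin ℓ → Fin n → Fin b =>
          f x ≤ Finset.univ.inf' ⟨⟨0, hℓ⟩, Finset.mem_univ _⟩
            (fun i => cmTable n b f (H i) (H i x))),
          ∏ i, μ (H i)) = 1) ∧
      ((∑ H ∈ Finset.univ.filter (fun H : Fin ℓ → Fin n → Fin b =>
          (f x : ℝ) + 2 * ((∑ y : Fin n, f y : ℕ) : ℝ) / (b : ℝ) <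
            ((Finset.univ.inf' ⟨⟨0, hℓ⟩, Finset.mem_univ _⟩
              (fun i => cmTable n b f (H i) (H i x)) : ℕ) : ℝ)),
          ∏ i, μ (H i)) ≤ 1 / 2 ^ ℓ) := by
  intro x
  refine ⟨?_, ?_⟩
  · refine (sum_congr (filter_true_of_mem fun H _ =>
      le_inf' _ _ fun i _ => le_cmTable_apply_self f (H i) x) fun _ _ => rfl).trans ?_
    rw [← Fintype.piFinset_univ, ← sum_pow', hsum, one_pow]
  · refine (sum_congr (filter_lt_cast_inf'_eq_piFinset _ (fun h => cmTable n b f h (h x)) _)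
      fun _ _ => rfl).trans_le ?_
    rw [← sum_pow', ← one_div_pow]
    exact pow_le_pow_left₀ (sum_nonneg fun h _ => hpos h)
      (sum_filter_lt_cmTable_le_half f μ hpos hcoll x) ℓ

/-- Count-Min sketch guarantee: with `ℓ` hash functions drawn independently from a
distribution with collision probability at most `1/b` (the `ℓ`-fold product measure,
expressed by the product weights `∏ i, μ (H i)`): (i) with probability 1 the minimum
counter `min_i T_{h_i}(h_i x)` is at least `f x`; (ii) the probability that the minimum
counter exceeds `f x + 2m/b` is at most `2^{-ℓ}`. -/
theorem count_min_guarantee (n b ℓ : ℕ) (hn : 0 < n) (hb : 0 < b) (hℓ : 0 < ℓ)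
    (f : Fin n → ℕ) (μ : (Fin n → Fin b) → ℝ)
    (hpos : ∀ h, 0 ≤ μ h) (hsum : (∑ h : Fin n → Fin b, μ h) = 1)
    (hcoll : ∀ x y : Fin n, x ≠ y →
      (∑ h : Fin n → Fin b, if h x = h y then μ h else 0) ≤ 1 / (b : ℝ)) :
    ∀ x : Fin n,
      ((∑ H ∈ Finset.univ.filter (fun H : Fin ℓ → Fin n → Fin b =>
          f x ≤ Finset.univ.inf' ⟨⟨0, hℓ⟩, Finset.mem_univ _⟩
            (fun i => cmTable n b f (H i) (H i x))),
          ∏ i, μ (H i)) = 1) ∧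
      ((∑ H ∈ Finset.univ.filter (fun H : Fin ℓ → Fin n → Fin b =>
          (f x : ℝ) + 2 * ((∑ y : Fin n, f y : ℕ) : ℝ) / (b : ℝ) <
            ((Finset.univ.inf' ⟨⟨0, hℓ⟩, Finset.mem_univ _⟩
              (fun i => cmTable n b f (H i) (H i x)) : ℕ) : ℝ)),
          ∏ i, μ (H i)) ≤ 1 / 2 ^ ℓ) :=
  count_min_guarantee_general n b ℓ hℓ f μ hpos hsum hcoll
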